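/- arXiv:1310.4068 — 2 statements merged into one kernel-verified Lean document; each statement's English description precedes it below -/
import Mathlib

section
/- Let $c, \tilde{C}, h \ge 0$ and let $y, z : [0,T] \to [0,\infty)$ be functions with $y$ differentiable satisfying $y'(t) + z(t) \le c\,(y(t) + h\,y(t)^2 + h^2 y(t)^3 + \tilde{C})$ for $0 \le t \le T$ and $y(0) = y_0$. If $h$ is small enough that $1 - h (y_0 + \tilde{C})^2 (e^{2(1+h)ct} - 1) > 0$ for all $t \in [0,T]$, then for all $t \in [0,T]$, $y(t) + \int_0^t z(s)\,ds \le \dfrac{e^{(1+h)ct}(y_0+\tilde{C})}{\sqrt{1 - h (y_0+\tilde{C})^2 (e^{2(1+h)ct}-1)}}$. -/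
/-! With `a = (1 + h) c`, the right-hand side of the differential inequality is at most
`a (u + h u³)` at `u = y + C'`, and the claimed bound is the solution `φ` of the Bernoulli equation
`φ' = a (φ + h φ³)`, `φ 0 = y₀ + C'`. As `z ≥ 0`, `y + C'` is a subsolution of this equation, so
`y + C' ≤ φ` by comparison for a locally Lipschitz vector field. Since `u ↦ a (u + h u³)` is
monotone on `[0, ∞)`, this gives `y' + z ≤ φ'`, and integrating yields
`y t - y₀ + ∫₀ᵗ z ≤ φ t - φ 0 = φ t - y₀ - C'`. -/

open intervalIntegral

open Set Real MeasureTheory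

theorem image_le_of_deriv_right_le_of_locallyLipschitz {f f' φ φ' g : ℝ → ℝ} {a b : ℝ}
    (hg : LocallyLipschitz g)
    (hf : ContinuousOn f (Icc a b)) (hf' : ∀ x ∈ Ico a b, HasDerivWithinAt f (f' x) (Ici x) x)
    (hφ : ContinuousOn φ (Icc a b)) (hφ' : ∀ x ∈ Ico a b, HasDerivWithinAt φ (φ' x) (Ici x) x)
    (ha : f a ≤ φ a) (hfg : ∀ x ∈ Ico a b, f' x ≤ g (f x))
    (hgφ : ∀ x ∈ Ico a b, g (φ x) ≤ φ' x) :
    ∀ ⦃x⦄, x ∈ Icc a b → f x ≤ φ x := by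
  obtain ⟨K, hK⟩ := hg.locallyLipschitzOn.exists_lipschitzOnWith_of_compact
    ((isCompact_Icc.image_of_continuousOn hf).union (isCompact_Icc.image_of_continuousOn hφ))
  -- `φ` plus a small multiple of `exp ((K + 1) (x - a))` is a strict supersolution.
  have hfence : ∀ ε > 0, ∀ x ∈ Icc a b, f x ≤ φ x + ε * exp ((K + 1) * (x - a)) := by
    intro ε hε
    have hexp (x : ℝ) : HasDerivAt (fun x => ε * exp ((K + 1) * (x - a)))
        (ε * (exp ((K + 1) * (x - a)) * (K + 1))) x := by
      simpa using (((hasDerivAt_id x).sub_const a).const_mul (K + 1 : ℝ)).exp.const_mul ε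
    refine image_le_of_deriv_right_lt_deriv_boundary' hf hf'
      (by simp only [sub_self, mul_zero, exp_zero, mul_one]; linarith) (hφ.add (by fun_prop))
      (fun x hx => (hφ' x hx).add (hexp x).hasDerivWithinAt) ?_
    intro x hx hfx
    have hd : 0 < ε * exp ((K + 1) * (x - a)) := by positivity
    have hlip : g (f x) - g (φ x) ≤ K * (f x - φ x) := by
      have := hK.dist_le_mul (f x) (Or.inl ⟨x, Ico_subset_Icc_self hx, rfl⟩)
        (φ x) (Or.inr ⟨x, Ico_subset_Icc_self hx, rfl⟩)
      rw [Real.dist_eq, Real.dist_eq] at this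
      rw [← abs_of_pos (show 0 < f x - φ x by linarith)]
      exact (le_abs_self _).trans this
    nlinarith [hfg x hx, hgφ x hx]
  intro x hx
  refine le_of_forall_pos_le_add fun δ hδ => ?_
  simpa [div_mul_cancel₀ _ (exp_pos _).ne'] using
    hfence (δ / exp ((K + 1) * (x - a))) (by positivity) x hx

theorem sub_add_integral_le_of_hasDerivAt {y y' φ φ' z : ℝ → ℝ} {a b : ℝ} (hab : a ≤ b)
    (hy : ∀ x ∈ Icc a b, HasDerivAt y (y' x) x) (hφ : ∀ x ∈ Icc a b, HasDerivAt φ (φ' x) x)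
    (hz : IntegrableOn z (Icc a b)) (hle : ∀ x ∈ Ioo a b, y' x + z x ≤ φ' x) :
    y b - y a + ∫ x in a..b, z x ≤ φ b - φ a := by
  have := sub_le_integral_of_hasDeriv_right_of_le hab (g := y - φ)
    (fun x hx => ((hy x hx).sub (hφ x hx)).continuousAt.continuousWithinAt)
    (fun x hx => ((hy x (Ioo_subset_Icc_self hx)).sub
      (hφ x (Ioo_subset_Icc_self hx))).hasDerivWithinAt) hz.neg
    (fun x hx => by simp only [Pi.neg_apply]; linarith [hle x hx])
  simp only [Pi.sub_apply, Pi.neg_apply, intervalIntegral.integral_neg] at this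
  linarith

theorem add_mul_sq_add_sq_mul_cube_le {u C h : ℝ} (hu : 0 ≤ u) (hC : 0 ≤ C) (hh : 0 ≤ h) :
    u + h * u ^ 2 + h ^ 2 * u ^ 3 + C ≤ (1 + h) * (u + C + h * (u + C) ^ 3) := by
  have hsq : u ^ 2 ≤ u + u ^ 3 := by nlinarith [mul_nonneg hu (sq_nonneg (u - 1))]
  have hcube : u ^ 3 ≤ (u + C) ^ 3 := by gcongr; linarith
  nlinarith [mul_le_mul_of_nonneg_left hsq hh, mul_le_mul_of_nonneg_left hcube hh,
    mul_le_mul_of_nonneg_left hcube (mul_nonneg hh hh)]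

noncomputable def bernoulliSolution (a h w₀ t : ℝ) : ℝ :=
  exp (a * t) * w₀ / √(1 - h * w₀ ^ 2 * (exp (2 * a * t) - 1))

theorem bernoulliSolution_zero (a h w₀ : ℝ) : bernoulliSolution a h w₀ 0 = w₀ := by
  simp [bernoulliSolution]

theorem hasDerivAt_bernoulliSolution {a h w₀ t : ℝ}
    (hD : 0 < 1 - h * w₀ ^ 2 * (exp (2 * a * t) - 1)) :
    HasDerivAt (bernoulliSolution a h w₀)
      (a * (bernoulliSolution a h w₀ t + h * bernoulliSolution a h w₀ t ^ 3)) t := by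
  have hexp (k : ℝ) : HasDerivAt (fun t => exp (k * t)) (exp (k * t) * k) t := by
    simpa using ((hasDerivAt_id t).const_mul k).exp
  have hden := (((hexp (2 * a)).sub_const 1).const_mul (h * w₀ ^ 2)).const_sub 1 |>.sqrt hD.ne'
  refine HasDerivAt.congr_deriv (f := bernoulliSolution a h w₀)
    (((hexp a).mul_const w₀).div hden (sqrt_pos.2 hD).ne') ?_
  have hsq : exp (2 * a * t) = exp (a * t) ^ 2 := by rw [← exp_nat_mul]; ring_nf
  have hsqrt := (sqrt_pos.2 hD).ne'
  simp only [bernoulliSolution, hsq] at hsqrt ⊢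
  field_simp
  ring

theorem stmt_0_general (T c C' h y₀ : ℝ) (hc : 0 ≤ c) (hC' : 0 ≤ C') (hh : 0 ≤ h)
    (y y' z : ℝ → ℝ)
    (hy_nonneg : ∀ t ∈ Set.Icc (0 : ℝ) T, 0 ≤ y t)
    (hz_nonneg : ∀ t ∈ Set.Icc (0 : ℝ) T, 0 ≤ z t)
    (hz_int : MeasureTheory.IntegrableOn z (Set.Icc (0 : ℝ) T))
    (hderiv : ∀ t ∈ Set.Icc (0 : ℝ) T, HasDerivAt y (y' t) t)
    (hineq : ∀ t ∈ Set.Icc (0 : ℝ) T,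
      y' t + z t ≤ c * (y t + h * y t ^ 2 + h ^ 2 * y t ^ 3 + C'))
    (hy0 : y 0 = y₀)
    (hsmall : ∀ t ∈ Set.Icc (0 : ℝ) T,
      0 < 1 - h * (y₀ + C') ^ 2 * (Real.exp (2 * (1 + h) * c * t) - 1)) :
    ∀ t ∈ Set.Icc (0 : ℝ) T,
      y t + ∫ s in (0 : ℝ)..t, z s ≤
        Real.exp ((1 + h) * c * t) * (y₀ + C') /
          Real.sqrt (1 - h * (y₀ + C') ^ 2 * (Real.exp (2 * (1 + h) * c * t) - 1)) := by
  intro t ht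
  set φ := bernoulliSolution ((1 + h) * c) h (y₀ + C') with hφ
  have hφ' (s : ℝ) (hs : s ∈ Icc 0 T) : HasDerivAt φ ((1 + h) * c * (φ s + h * φ s ^ 3)) s :=
    hasDerivAt_bernoulliSolution (by simpa only [mul_assoc] using hsmall s hs)
  have hyz (s : ℝ) (hs : s ∈ Icc 0 T) :
      y' s + z s ≤ (1 + h) * c * (y s + C' + h * (y s + C') ^ 3) :=
    calc y' s + z s ≤ c * (y s + h * y s ^ 2 + h ^ 2 * y s ^ 3 + C') := hineq s hs
      _ ≤ c * ((1 + h) * (y s + C' + h * (y s + C') ^ 3)) := by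
        gcongr; exact add_mul_sq_add_sq_mul_cube_le (hy_nonneg s hs) hC' hh
      _ = _ := by ring
  have hcomp : ∀ s ∈ Icc 0 T, y s + C' ≤ φ s :=
    image_le_of_deriv_right_le_of_locallyLipschitz (g := fun u => (1 + h) * c * (u + h * u ^ 3))
      (ContDiff.locallyLipschitz (𝕂 := ℝ) (by fun_prop))
      (fun s hs => ((hderiv s hs).add_const C').continuousAt.continuousWithinAt)
      (fun s hs => ((hderiv s (Ico_subset_Icc_self hs)).add_const C').hasDerivWithinAt)
      (fun s hs => (hφ' s hs).continuousAt.continuousWithinAt)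
      (fun s hs => (hφ' s (Ico_subset_Icc_self hs)).hasDerivWithinAt)
      (by rw [hy0, hφ, bernoulliSolution_zero])
      (fun s hs => by
        linarith [hyz s (Ico_subset_Icc_self hs), hz_nonneg s (Ico_subset_Icc_self hs)])
      (fun s _ => le_rfl)
  have hsub : Icc 0 t ⊆ Icc 0 T := Icc_subset_Icc_right ht.2
  have hint := sub_add_integral_le_of_hasDerivAt ht.1 (fun s hs => hderiv s (hsub hs))
    (fun s hs => hφ' s (hsub hs)) (hz_int.mono_set hsub) fun s hs => by
      have hs' := hsub (Ioo_subset_Icc_self hs)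
      have hy := hy_nonneg s hs'
      refine (hyz s hs').trans ?_
      gcongr <;> exact hcomp s hs'
  rw [hy0, hφ, bernoulliSolution_zero] at hint
  have hφt : φ t = exp ((1 + h) * c * t) * (y₀ + C') /
      √(1 - h * (y₀ + C') ^ 2 * (exp (2 * (1 + h) * c * t) - 1)) := by
    simp only [hφ, bernoulliSolution, mul_assoc]
  linarith

/-- Generalized Gronwall inequality with quadratic and cubic perturbations
controlled by a small parameter `h`. -/
theorem stmt_0 (T c C' h y₀ : ℝ) (hT : 0 ≤ T) (hc : 0 ≤ c) (hC' : 0 ≤ C') (hh : 0 ≤ h)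
    (y y' z : ℝ → ℝ)
    (hy_nonneg : ∀ t ∈ Set.Icc (0 : ℝ) T, 0 ≤ y t)
    (hz_nonneg : ∀ t ∈ Set.Icc (0 : ℝ) T, 0 ≤ z t)
    (hz_int : MeasureTheory.IntegrableOn z (Set.Icc (0 : ℝ) T))
    (hderiv : ∀ t ∈ Set.Icc (0 : ℝ) T, HasDerivAt y (y' t) t)
    (hineq : ∀ t ∈ Set.Icc (0 : ℝ) T,
      y' t + z t ≤ c * (y t + h * y t ^ 2 + h ^ 2 * y t ^ 3 + C'))
    (hy0 : y 0 = y₀)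
    (hsmall : ∀ t ∈ Set.Icc (0 : ℝ) T,
      0 < 1 - h * (y₀ + C') ^ 2 * (Real.exp (2 * (1 + h) * c * t) - 1)) :
    ∀ t ∈ Set.Icc (0 : ℝ) T,
      y t + ∫ s in (0 : ℝ)..t, z s ≤
        Real.exp ((1 + h) * c * t) * (y₀ + C') /
          Real.sqrt (1 - h * (y₀ + C') ^ 2 * (Real.exp (2 * (1 + h) * c * t) - 1)) :=
  stmt_0_general T c C' h y₀ hc hC' hh y y' z hy_nonneg hz_nonneg hz_int hderiv hineq hy0 hsmall
end

section
/- Let $c, h \ge 0$ and let $\eta : [0,T] \to [0,\infty)$ be differentiable with $\eta'(t) \le c\big((1+h)\eta(t) + (h+h^2)\eta(t)^3\big)$ for all $t \in [0,T]$, with $\eta(0) = \eta_0 > 0$. If $1 - h\,\eta_0^2\,(e^{2(1+h)ct} - 1) > 0$ for all $t \in [0,T]$, then $\eta(t)^2 \le \dfrac{e^{2(1+h)ct}\,\eta_0^2}{1 - h\,\eta_0^2\,(e^{2(1+h)ct} - 1)}$ for all $t \in [0,T]$. -/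
/-!
With `u = η² / (1 + h η²)` the hypothesis on `η'` gives
`u' = 2 η η' / (1 + h η²)² ≤ 2 (1 + h) c u`,
because `(1 + h) η + (h + h²) η³ = (1 + h) η (1 + h η²)`.
Grönwall's inequality bounds `u t` by `e^{2(1+h)ct} u 0`, and solving
`y / (1 + h y) ≤ E y₀ / (1 + h y₀)` for `y = η t²` gives the stated bound,
the smallness hypothesis being exactly positivity of the denominator.
-/

open Real Set

lemma hasDerivAt_div_one_add_mul {h y : ℝ} (hy : 1 + h * y ≠ 0) :
    HasDerivAt (fun y => y / (1 + h * y)) (1 / (1 + h * y) ^ 2) y := by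
  refine ((hasDerivAt_id' y).div (((hasDerivAt_id' y).const_mul h).const_add 1) hy).congr_deriv ?_
  ring

lemma le_mul_exp_of_hasDerivAt_le_mul {f f' : ℝ → ℝ} {K a b : ℝ}
    (hf : ∀ x ∈ Icc a b, HasDerivAt f (f' x) x) (bound : ∀ x ∈ Icc a b, f' x ≤ K * f x) :
    ∀ x ∈ Icc a b, f x ≤ f a * exp (K * (x - a)) := by
  intro x hx
  rw [← gronwallBound_ε0]
  refine le_gronwallBound_of_liminf_deriv_right_le
    (fun y hy => (hf y hy).continuousAt.continuousWithinAt) (fun y hy _ hr => ?_) le_rfl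
    (fun y hy => by simpa using bound y (Ico_subset_Icc_self hy)) x hx
  simpa [slope_def_field, div_eq_inv_mul] using
    (hf y (Ico_subset_Icc_self hy)).hasDerivWithinAt.liminf_right_slope_le hr

lemma two_mul_mul_div_sq_le {e d c h : ℝ} (he : 0 ≤ e) (hh : 0 ≤ h)
    (hd : d ≤ c * ((1 + h) * e + (h + h ^ 2) * e ^ 3)) :
    2 * e * d / (1 + h * e ^ 2) ^ 2 ≤ 2 * (1 + h) * c * (e ^ 2 / (1 + h * e ^ 2)) := by
  have hpos : 0 < 1 + h * e ^ 2 := by positivity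
  rw [div_le_iff₀ (by positivity)]
  calc 2 * e * d ≤ 2 * e * (c * ((1 + h) * e + (h + h ^ 2) * e ^ 3)) := by gcongr
    _ = 2 * (1 + h) * c * (e ^ 2 / (1 + h * e ^ 2)) * (1 + h * e ^ 2) ^ 2 := by field_simp

lemma le_div_of_div_one_add_mul_le {y y₀ h E : ℝ} (hy : 0 ≤ y) (hy₀ : 0 ≤ y₀) (hh : 0 ≤ h)
    (hD : 0 < 1 - h * y₀ * (E - 1)) (hle : y / (1 + h * y) ≤ y₀ / (1 + h * y₀) * E) :
    y ≤ E * y₀ / (1 - h * y₀ * (E - 1)) := by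
  rw [div_mul_eq_mul_div, div_le_div_iff₀ (by positivity) (by positivity)] at hle
  rw [le_div_iff₀ hD]
  nlinarith

theorem stmt_1_general (T c h η₀ : ℝ) (hh : 0 ≤ h)
    (η η' : ℝ → ℝ)
    (hnonneg : ∀ t ∈ Set.Icc (0 : ℝ) T, 0 ≤ η t)
    (hderiv : ∀ t ∈ Set.Icc (0 : ℝ) T, HasDerivAt η (η' t) t)
    (hineq : ∀ t ∈ Set.Icc (0 : ℝ) T,
      η' t ≤ c * ((1 + h) * η t + (h + h ^ 2) * η t ^ 3))
    (h0 : η 0 = η₀)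
    (hsmall : ∀ t ∈ Set.Icc (0 : ℝ) T,
      0 < 1 - h * η₀ ^ 2 * (Real.exp (2 * (1 + h) * c * t) - 1)) :
    ∀ t ∈ Set.Icc (0 : ℝ) T,
      η t ^ 2 ≤ Real.exp (2 * (1 + h) * c * t) * η₀ ^ 2 /
        (1 - h * η₀ ^ 2 * (Real.exp (2 * (1 + h) * c * t) - 1)) := by
  have hu : ∀ t ∈ Icc 0 T, HasDerivAt (fun t => η t ^ 2 / (1 + h * η t ^ 2))
      (2 * η t * η' t / (1 + h * η t ^ 2) ^ 2) t := fun t ht => by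
    refine ((hasDerivAt_div_one_add_mul (h := h) (y := η t ^ 2) (by positivity)).comp t
      ((hderiv t ht).pow 2)).congr_deriv ?_
    ring
  have hgronwall := le_mul_exp_of_hasDerivAt_le_mul hu
    fun t ht => two_mul_mul_div_sq_le (hnonneg t ht) hh (hineq t ht)
  intro t ht
  refine le_div_of_div_one_add_mul_le (by positivity) (by positivity) hh (hsmall t ht) ?_
  simpa [h0] using hgronwall t ht

/-- Core integration step of the generalized Gronwall inequality. -/
theorem stmt_1 (T c h η₀ : ℝ) (hT : 0 ≤ T) (hc : 0 ≤ c) (hh : 0 ≤ h) (hη₀ : 0 < η₀)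
    (η η' : ℝ → ℝ)
    (hnonneg : ∀ t ∈ Set.Icc (0 : ℝ) T, 0 ≤ η t)
    (hderiv : ∀ t ∈ Set.Icc (0 : ℝ) T, HasDerivAt η (η' t) t)
    (hineq : ∀ t ∈ Set.Icc (0 : ℝ) T,
      η' t ≤ c * ((1 + h) * η t + (h + h ^ 2) * η t ^ 3))
    (h0 : η 0 = η₀)
    (hsmall : ∀ t ∈ Set.Icc (0 : ℝ) T,
      0 < 1 - h * η₀ ^ 2 * (Real.exp (2 * (1 + h) * c * t) - 1)) :
    ∀ t ∈ Set.Icc (0 : ℝ) T,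
      η t ^ 2 ≤ Real.exp (2 * (1 + h) * c * t) * η₀ ^ 2 /
        (1 - h * η₀ ^ 2 * (Real.exp (2 * (1 + h) * c * t) - 1)) :=
  stmt_1_general T c h η₀ hh η η' hnonneg hderiv hineq h0 hsmall
end
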